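/- As polynomials in ℝ[x,y], the Jacobian determinant (∂P/∂x)(∂Q/∂y) − (∂P/∂y)(∂Q/∂x) of the Pinchuk map F = (P,Q) equals t² + (t + f·(13 + 15h))² + f². -/

import Mathlib

open MvPolynomial

/-- `t = xy − 1`, with `X 0 = x`, `X 1 = y`. -/
noncomputable def tP : MvPolynomial (Fin 2) ℝ := X 0 * X 1 - 1

/-- `h = t(xt + 1)`. -/
noncomputable def hP : MvPolynomial (Fin 2) ℝ := tP * (X 0 * tP + 1)

/-- `f = (xt + 1)²(t² + y)`. -/
noncomputable def fP : MvPolynomial (Fin 2) ℝ := (X 0 * tP + 1) ^ 2 * (tP ^ 2 + X 1)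

/-- `P = f + h`. -/
noncomputable def PP : MvPolynomial (Fin 2) ℝ := fP + hP

/-- The auxiliary polynomial `u(f,h)`. -/
noncomputable def uP : MvPolynomial (Fin 2) ℝ :=
  170 * fP * hP + 91 * hP ^ 2 + 195 * fP * hP ^ 2 + 69 * hP ^ 3 + 75 * fP * hP ^ 3 +
    C (75 / 4 : ℝ) * hP ^ 4

/-- `Q = −t² − 6th(h + 1) − u(f,h)`. -/
noncomputable def QP : MvPolynomial (Fin 2) ℝ := -tP ^ 2 - 6 * tP * hP * (hP + 1) - uP

/-!
For fixed `p`, the Jacobian `q ↦ ∂ₓp ∂ᵧq - ∂ᵧp ∂ₓq` is a derivation, so by the chain rule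
`J(P, Q)` is a polynomial combination of `J(P, t)`, `J(P, h)` and `J(P, f)`. As `P = f + h`,
antisymmetry reduces the last two to `J(f, h) = -f`, and a direct computation gives
`J(P, t) = -t + 3h - f + 3h²`. What remains is `18 (h + 1)` times the relation
`f (h - t) = h² (h + 1)` between `t`, `h` and `f`.
-/

theorem Derivation.map_ofNat {R A M : Type*} [CommSemiring R] [CommSemiring A] [AddCommMonoid M]
    [Algebra R A] [Module A M] [Module R M] (D : Derivation R A M) (n : ℕ) [n.AtLeastTwo] :
    D (no_index (OfNat.ofNat n : A)) = 0 :=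
  D.map_natCast n

namespace MvPolynomial

variable {R σ : Type*} [CommRing R]

noncomputable def jacobianDerivation (i j : σ) (p : MvPolynomial σ R) :
    Derivation R (MvPolynomial σ R) (MvPolynomial σ R) :=
  pderiv i p • pderiv j - pderiv j p • pderiv i

theorem jacobianDerivation_apply (i j : σ) (p q : MvPolynomial σ R) :
    jacobianDerivation i j p q = pderiv i p * pderiv j q - pderiv j p * pderiv i q :=
  rfl

theorem jacobianDerivation_comm (i j : σ) (p q : MvPolynomial σ R) :
    jacobianDerivation i j p q = -jacobianDerivation i j q p := by
  simp only [jacobianDerivation_apply]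
  ring

theorem jacobianDerivation_self (i j : σ) (p : MvPolynomial σ R) :
    jacobianDerivation i j p p = 0 := by
  simp only [jacobianDerivation_apply]
  ring

theorem jacobianDerivation_add_left (i j : σ) (p q r : MvPolynomial σ R) :
    jacobianDerivation i j (p + q) r = jacobianDerivation i j p r + jacobianDerivation i j q r := by
  simp only [jacobianDerivation_apply, map_add]
  ring

end MvPolynomial

theorem pderiv_zero_tP : pderiv 0 tP = X 1 := by
  simp [tP, pderiv_X]

theorem pderiv_one_tP : pderiv 1 tP = X 0 := by
  simp [tP, pderiv_X]

theorem fP_mul_hP_sub_tP : fP * (hP - tP) = hP ^ 2 * (hP + 1) := by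
  simp only [fP, hP, tP]
  ring

theorem jacobianDerivation_fP_hP : jacobianDerivation 0 1 fP hP = -fP := by
  simp only [jacobianDerivation_apply, fP, hP, map_add, Derivation.leibniz, Derivation.leibniz_pow,
    Derivation.map_one_eq_zero, pderiv_X_self, pderiv_X_of_ne zero_ne_one,
    pderiv_X_of_ne one_ne_zero, pderiv_zero_tP, pderiv_one_tP, smul_eq_mul, nsmul_eq_mul]
  simp only [tP]
  ring

theorem jacobianDerivation_PP_tP :
    jacobianDerivation 0 1 PP tP = -tP + 3 * hP - fP + 3 * hP ^ 2 := by
  simp only [jacobianDerivation_apply, PP, fP, hP, map_add, Derivation.leibniz,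
    Derivation.leibniz_pow, Derivation.map_one_eq_zero, pderiv_X_self, pderiv_X_of_ne zero_ne_one,
    pderiv_X_of_ne one_ne_zero, pderiv_zero_tP, pderiv_one_tP, smul_eq_mul, nsmul_eq_mul]
  simp only [tP]
  ring

theorem jacobianDerivation_PP_hP : jacobianDerivation 0 1 PP hP = -fP := by
  rw [PP, jacobianDerivation_add_left, jacobianDerivation_self, jacobianDerivation_fP_hP, add_zero]

theorem jacobianDerivation_PP_fP : jacobianDerivation 0 1 PP fP = fP := by
  rw [PP, jacobianDerivation_add_left, jacobianDerivation_self, jacobianDerivation_comm,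
    jacobianDerivation_fP_hP, zero_add, neg_neg]

theorem pinchuk_jacobian_identity :
    pderiv 0 PP * pderiv 1 QP - pderiv 1 PP * pderiv 0 QP =
      tP ^ 2 + (tP + fP * (13 + 15 * hP)) ^ 2 + fP ^ 2 := by
  -- `algebra` sees through the coefficient `C (75 / 4)` only when it is written as `algebraMap`.
  rw [← jacobianDerivation_apply, QP, uP, ← algebraMap_eq]
  simp only [map_sub, map_add, map_neg, Derivation.leibniz, Derivation.leibniz_pow,
    Derivation.map_ofNat, Derivation.map_algebraMap, Derivation.map_one_eq_zero, smul_eq_mul,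
    nsmul_eq_mul, jacobianDerivation_PP_tP, jacobianDerivation_PP_hP, jacobianDerivation_PP_fP]
  linear_combination (norm := algebra) (18 * (hP + 1)) * fP_mul_hP_sub_tP
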